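/- For every integer t ≥ 2, every F_{t,t}-free finite bipartite graph with at least two vertices contains two distinct vertices x, y with sd(x, y) ≤ 2t. -/

import Mathlib

open SimpleGraph

/-- `F_{t,p}`: two stars `K_{1,t}` and `K_{1,p}` with their centers (`inl 0` and `inl 1`)
in one part of the bipartition, plus an isolated vertex (`inr (t+p)`) in the other part. -/
def Ftp (t p : ℕ) : SimpleGraph (Fin 2 ⊕ Fin (t + p + 1)) :=
  SimpleGraph.fromRel fun u v =>
    match u, v with
    | Sum.inl a, Sum.inr b => (a = 0 ∧ (b : ℕ) < t) ∨ (a = 1 ∧ t ≤ (b : ℕ) ∧ (b : ℕ) < t + p)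
    | _, _ => False

/-- The symmetric difference of two vertices `x, y`: the number of vertices other than
`x` and `y` adjacent to exactly one of `x` and `y`. -/
noncomputable def sd {V : Type*} (G : SimpleGraph V) (x y : V) : ℕ :=
  {z : V | z ≠ x ∧ z ≠ y ∧ Xor' (G.Adj x z) (G.Adj y z)}.ncard

/-!
Fix a 2-colouring `c` and let `M v` be the set of vertices of the other colour that are not
adjacent to `v`. For distinct `x, y` of the same colour, `sd(x, y) = |M y \ M x| + |M x \ M y|`,
and a common non-neighbour `z` together with `t` vertices of each difference spans an induced
`F_{t,t}`. So if all such pairs have `sd > 2t`, then one difference has fewer than `t` elements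
and the other more than `t`, whence `|M x|` and `|M y|` differ by at least 3. Any two vertices
of `M z` are such a pair with common non-neighbour `z`, so `|M z| ≤ D / 3 + 1` where
`D = max |M v|`; thus `D ≤ 1` and `sd(x, y) ≤ 2` for every pair of equal colour. Such a pair
exists once there are three vertices; with only two, `sd = 0`.
-/

open Finset

lemma Finset.card_le_div_add_one_of_separated {ι : Type*} (s : Finset ι) (f : ι → ℕ)
    {m k : ℕ} (hk : 0 < k) (hf : ∀ i ∈ s, f i ≤ m)
    (hsep : ∀ i ∈ s, ∀ j ∈ s, i ≠ j → f i + k ≤ f j ∨ f j + k ≤ f i) :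
    #s ≤ m / k + 1 := by
  have hlt {a b : ℕ} (h : a + k ≤ b) : a / k < b / k :=
    calc a / k < a / k + 1 := Nat.lt_succ_self _
      _ = (a + k) / k := (Nat.add_div_right a hk).symm
      _ ≤ b / k := Nat.div_le_div_right h
  have hmaps : ∀ i ∈ s, f i / k ∈ range (m / k + 1) := fun i hi =>
    mem_range.2 (Nat.lt_succ_of_le (Nat.div_le_div_right (hf i hi)))
  have hinj : Set.InjOn (fun i => f i / k) s := by
    intro i hi j hj hij
    by_contra hne
    rcases hsep i hi j hj hne with h | h
    · exact (hlt h).ne hij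
    · exact (hlt h).ne' hij
  simpa using card_le_card_of_injOn _ hmaps hinj

lemma sd_le_card_sub_two {V : Type*} [Finite V] (G : SimpleGraph V) {x y : V} (hxy : x ≠ y) :
    sd G x y ≤ Nat.card V - 2 := by
  calc sd G x y ≤ ({x, y}ᶜ : Set V).ncard :=
        Set.ncard_le_ncard (fun z hz => by simp [hz.1, hz.2.1]) (Set.toFinite _)
    _ = Nat.card V - 2 := by rw [Set.ncard_compl, Set.ncard_pair hxy]

lemma Fin.two_eq_of_ne_of_ne {a b c : Fin 2} (hab : a ≠ b) (hbc : b ≠ c) : a = c := by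
  omega

namespace SimpleGraph.Coloring

variable {V : Type*} {G : SimpleGraph V}

lemma nonempty_embedding_of_adj_iff {α β : Type*} {H : SimpleGraph (α ⊕ β)}
    (hα : ∀ a a', ¬ H.Adj (.inl a) (.inl a')) (hβ : ∀ b b', ¬ H.Adj (.inr b) (.inr b'))
    (c : G.Coloring (Fin 2)) {i : Fin 2} {f : α → V} {g : β → V}
    (hf_inj : f.Injective) (hg_inj : g.Injective)
    (hf : ∀ a, c (f a) = i) (hg : ∀ b, c (g b) ≠ i)
    (hfg : ∀ a b, G.Adj (f a) (g b) ↔ H.Adj (.inl a) (.inr b)) :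
    Nonempty (H ↪g G) := by
  have hinj : (Sum.elim f g).Injective :=
    hf_inj.sumElim hg_inj fun a b h => hg b (h ▸ hf a)
  refine ⟨⟨⟨Sum.elim f g, hinj⟩, fun {u v} => ?_⟩⟩
  rcases u with a | b <;> rcases v with a' | b'
  · exact iff_of_false (fun h => c.valid h ((hf a).trans (hf a').symm)) (hα a a')
  · exact hfg a b'
  · exact (G.adj_comm _ _).trans ((hfg a' b).trans (H.adj_comm _ _))
  · exact iff_of_false (fun h => c.valid h (Fin.two_eq_of_ne_of_ne (hg b) (hg b').symm))
      (hβ b b')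

variable [Fintype V] [DecidableRel G.Adj] (c : G.Coloring (Fin 2))

def crossNonNeighborFinset (v : V) : Finset V := {w | c w ≠ c v ∧ ¬ G.Adj v w}

variable {c}

lemma mem_crossNonNeighborFinset {v w : V} :
    w ∈ c.crossNonNeighborFinset v ↔ c w ≠ c v ∧ ¬ G.Adj v w := by
  simp [crossNonNeighborFinset]

variable [DecidableEq V]

lemma mem_crossNonNeighborFinset_sdiff {x y w : V} (hc : c x = c y) :
    w ∈ c.crossNonNeighborFinset y \ c.crossNonNeighborFinset x ↔
      c w ≠ c x ∧ G.Adj x w ∧ ¬ G.Adj y w := by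
  simp only [mem_sdiff, mem_crossNonNeighborFinset, hc]
  tauto

lemma sd_eq_card_sdiff_add_card_sdiff {x y : V} (hc : c x = c y) :
    sd G x y = #(c.crossNonNeighborFinset y \ c.crossNonNeighborFinset x) +
      #(c.crossNonNeighborFinset x \ c.crossNonNeighborFinset y) := by
  rw [← card_union_of_disjoint disjoint_sdiff_sdiff, ← Set.ncard_coe_finset, sd]
  congr 1
  ext z
  simp only [Set.mem_ofPred_eq, coe_union, Set.mem_union, mem_coe,
    mem_crossNonNeighborFinset_sdiff hc, mem_crossNonNeighborFinset_sdiff hc.symm]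
  have hx : G.Adj x z → c z ≠ c x := fun h => (c.valid h).symm
  have hy : G.Adj y z → c z ≠ c y := fun h => (c.valid h).symm
  constructor
  · rintro ⟨-, -, ⟨hxz, hyz⟩ | ⟨hyz, hxz⟩⟩
    exacts [.inl ⟨hx hxz, hxz, hyz⟩, .inr ⟨hy hyz, hyz, hxz⟩]
  · rintro (⟨-, hxz, hyz⟩ | ⟨-, hyz, hxz⟩)
    exacts [⟨(hxz.ne ·.symm), fun h => c.valid (h ▸ hxz) hc, .inl ⟨hxz, hyz⟩⟩,
      ⟨fun h => c.valid (h ▸ hyz) hc.symm, (hyz.ne ·.symm), .inr ⟨hyz, hxz⟩⟩]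


lemma nonempty_ftp_embedding {t p : ℕ} {x y z : V} (hxy : x ≠ y) (hc : c x = c y)
    (hzx : z ∈ c.crossNonNeighborFinset x) (hzy : z ∈ c.crossNonNeighborFinset y)
    (ht : t ≤ #(c.crossNonNeighborFinset y \ c.crossNonNeighborFinset x))
    (hp : p ≤ #(c.crossNonNeighborFinset x \ c.crossNonNeighborFinset y)) :
    Nonempty (Ftp t p ↪g G) := by
  obtain ⟨P⟩ : Nonempty (Fin t ↪ ↥(c.crossNonNeighborFinset y \ c.crossNonNeighborFinset x)) :=
    Function.Embedding.nonempty_of_card_le (by rwa [Fintype.card_fin, Fintype.card_coe])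
  obtain ⟨Q⟩ : Nonempty (Fin p ↪ ↥(c.crossNonNeighborFinset x \ c.crossNonNeighborFinset y)) :=
    Function.Embedding.nonempty_of_card_le (by rwa [Fintype.card_fin, Fintype.card_coe])
  have hP i := (mem_crossNonNeighborFinset_sdiff hc).1 (P i).2
  have hQ i := (mem_crossNonNeighborFinset_sdiff hc.symm).1 (Q i).2
  rw [mem_crossNonNeighborFinset] at hzx hzy
  -- the leaves of the two stars, followed by the isolated vertex `z`
  let g (b : Fin (t + p + 1)) : V :=
    if h : (b : ℕ) < t then P ⟨b, h⟩
    else if h' : (b : ℕ) - t < p then Q ⟨b - t, h'⟩ else z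
  have hgx b : G.Adj x (g b) ↔ (b : ℕ) < t := by
    simp only [g]; split_ifs <;> simp [*]
  have hgy b : G.Adj y (g b) ↔ t ≤ (b : ℕ) ∧ (b : ℕ) < t + p := by
    simp only [g]; split_ifs <;> simp [*] <;> omega
  have hgc b : c (g b) ≠ c x := by
    simp only [g]; split_ifs
    exacts [(hP _).1, hc ▸ (hQ _).1, hzx.1]
  have hg_inj : g.Injective := by
    intro b b' h
    have hx := hgx b'
    have hy := hgy b'
    rw [← h, hgx] at hx
    rw [← h, hgy] at hy
    simp only [g] at h
    split_ifs at h
    all_goals first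
      | exact Fin.ext (Fin.mk.inj_iff.1 (P.injective (Subtype.ext h)))
      | exact Fin.ext (by have := Fin.mk.inj_iff.1 (Q.injective (Subtype.ext h)); omega)
      | omega
  refine nonempty_embedding_of_adj_iff (i := c x) (f := ![x, y]) (by simp [Ftp]) (by simp [Ftp]) c
    ?_ hg_inj ?_ hgc ?_
  · intro a b; fin_cases a <;> fin_cases b <;> simp [hxy, hxy.symm]
  · intro a; fin_cases a <;> simp [hc]
  · intro a b; fin_cases a <;> simp [Ftp, hgx, hgy]

lemma card_add_three_le_or {t : ℕ} (hfree : ¬ Nonempty (Ftp t t ↪g G)) {x y z : V}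
    (hxy : x ≠ y) (hc : c x = c y)
    (hzx : z ∈ c.crossNonNeighborFinset x) (hzy : z ∈ c.crossNonNeighborFinset y)
    (hsd : 2 * t < sd G x y) :
    #(c.crossNonNeighborFinset x) + 3 ≤ #(c.crossNonNeighborFinset y) ∨
      #(c.crossNonNeighborFinset y) + 3 ≤ #(c.crossNonNeighborFinset x) := by
  rw [sd_eq_card_sdiff_add_card_sdiff hc] at hsd
  have hsmall : ¬ (t ≤ #(c.crossNonNeighborFinset y \ c.crossNonNeighborFinset x) ∧
      t ≤ #(c.crossNonNeighborFinset x \ c.crossNonNeighborFinset y)) :=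
    fun ⟨h₁, h₂⟩ => hfree (nonempty_ftp_embedding hxy hc hzx hzy h₁ h₂)
  have hx := card_sdiff_add_card_inter (c.crossNonNeighborFinset x) (c.crossNonNeighborFinset y)
  have hy := card_sdiff_add_card_inter (c.crossNonNeighborFinset y) (c.crossNonNeighborFinset x)
  rw [inter_comm] at hy
  omega

lemma card_crossNonNeighborFinset_le_one {t : ℕ} (hfree : ¬ Nonempty (Ftp t t ↪g G))
    (hsd : ∀ x y, x ≠ y → c x = c y → 2 * t < sd G x y) (v : V) :
    #(c.crossNonNeighborFinset v) ≤ 1 := by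
  set D := univ.sup fun v => #(c.crossNonNeighborFinset v)
  have hbound z : #(c.crossNonNeighborFinset z) ≤ D / 3 + 1 := by
    refine card_le_div_add_one_of_separated _ _ three_pos (fun u _ => le_sup (mem_univ u)) ?_
    intro u hu w hw huw
    rw [mem_crossNonNeighborFinset] at hu hw
    have hc : c u = c w := Fin.two_eq_of_ne_of_ne hu.1 hw.1.symm
    exact card_add_three_le_or hfree huw hc
      (mem_crossNonNeighborFinset.2 ⟨hu.1.symm, (hu.2 ·.symm)⟩)
      (mem_crossNonNeighborFinset.2 ⟨hw.1.symm, (hw.2 ·.symm)⟩) (hsd u w huw hc)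
  have hD : D ≤ D / 3 + 1 := Finset.sup_le fun z _ => hbound z
  have hv : #(c.crossNonNeighborFinset v) ≤ D :=
    le_sup (f := fun v => #(c.crossNonNeighborFinset v)) (mem_univ v)
  omega

lemma sd_le_two {t : ℕ} (hfree : ¬ Nonempty (Ftp t t ↪g G))
    (hsd : ∀ x y, x ≠ y → c x = c y → 2 * t < sd G x y) {x y : V} (hc : c x = c y) :
    sd G x y ≤ 2 := by
  have hx := card_crossNonNeighborFinset_le_one hfree hsd x
  have hy := card_crossNonNeighborFinset_le_one hfree hsd y
  calc sd G x y = #(c.crossNonNeighborFinset y \ c.crossNonNeighborFinset x) +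
        #(c.crossNonNeighborFinset x \ c.crossNonNeighborFinset y) :=
        sd_eq_card_sdiff_add_card_sdiff hc
    _ ≤ #(c.crossNonNeighborFinset y) + #(c.crossNonNeighborFinset x) :=
        add_le_add (card_le_card sdiff_subset) (card_le_card sdiff_subset)
    _ ≤ 2 := by omega

end SimpleGraph.Coloring

/-- For `t ≥ 2`, every `F_{t,t}`-free bipartite graph with at least two vertices has two
distinct vertices of symmetric difference at most `2t`. -/
theorem statement4 {V : Type*} [Fintype V] (t : ℕ) (ht : 2 ≤ t) (G : SimpleGraph V)
    (hbip : G.Colorable 2) (hcard : 2 ≤ Nat.card V)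
    (hfree : ¬ Nonempty (Ftp t t ↪g G)) :
    ∃ x y : V, x ≠ y ∧ sd G x y ≤ 2 * t := by
  classical
  obtain ⟨c⟩ := hbip
  by_contra! hsd
  rcases le_or_gt (Nat.card V) 2 with hV | hV
  · have : Nontrivial V := Finite.one_lt_card_iff_nontrivial.1 hcard
    obtain ⟨x, y, hxy⟩ := exists_pair_ne V
    have hle := sd_le_card_sub_two G hxy
    have hlt := hsd x y hxy
    omega
  · obtain ⟨x, y, hxy, hc⟩ := Fintype.exists_ne_map_eq_of_card_lt c
      (by rwa [Fintype.card_fin, ← Nat.card_eq_fintype_card])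
    have hle := c.sd_le_two hfree (fun x y hxy _ => hsd x y hxy) hc
    have hlt := hsd x y hxy
    omega
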